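/- Let n ≥ 2, let v ∈ ℝⁿ satisfy η(v,v) = −1, and let ρ, P ∈ ℝ. The perfect-fluid stress tensor contracted with a vector t is T(t,t) = (ρ + P)·η(v,t)² + P·η(t,t). Then T(t,t) ≥ 0 for every timelike vector t ∈ ℝⁿ if and only if ρ ≥ 0 and ρ + P ≥ 0. That is, a perfect fluid satisfies the weak energy condition exactly when ρ ≥ 0 and ρ + P ≥ 0. -/

import Mathlib

open scoped BigOperators

/-- The Minkowski bilinear form on `ℝⁿ`: `η(x,y) = -x₀y₀ + ∑_{i≥1} xᵢyᵢ`. -/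
def minkowski {n : ℕ} (x y : Fin n → ℝ) : ℝ :=
  ∑ i : Fin n, (if (i : ℕ) = 0 then (-1 : ℝ) else 1) * x i * y i

/-!
Every `t` splits as `α • v + w` with `η(v,w) = 0`; then `t` is timelike iff `α² > η(w,w)` and
`T(t,t) = ρ α² + P η(w,w)`. Taking `w = 0` gives `ρ ≥ 0`; taking `η(w,w) > 0` and letting
`α² ↓ η(w,w)` (so that `t` tends to a null vector) gives `ρ + P ≥ 0`. Conversely,
`T(t,t) = (ρ + P)(η(v,t)² + η(t,t)) - ρ η(t,t)`, and `η(v,t)² + η(t,t) ≥ 0` is the reverse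
Cauchy–Schwarz inequality for the timelike vector `v`.
-/

open Filter Topology

section Bilinear

variable {n : ℕ}

theorem minkowski_comm (x y : Fin n → ℝ) : minkowski x y = minkowski y x :=
  Finset.sum_congr rfl fun _ _ => by ring

theorem minkowski_add_left (x y z : Fin n → ℝ) :
    minkowski (x + y) z = minkowski x z + minkowski y z := by
  simp only [minkowski, ← Finset.sum_add_distrib, Pi.add_apply]
  exact Finset.sum_congr rfl fun _ _ => by ring

theorem minkowski_smul_left (a : ℝ) (x y : Fin n → ℝ) :
    minkowski (a • x) y = a * minkowski x y := by
  simp only [minkowski, Finset.mul_sum, Pi.smul_apply, smul_eq_mul]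
  exact Finset.sum_congr rfl fun _ _ => by ring

theorem minkowski_add_right (x y z : Fin n → ℝ) :
    minkowski x (y + z) = minkowski x y + minkowski x z := by
  rw [minkowski_comm, minkowski_add_left, minkowski_comm y, minkowski_comm z]

theorem minkowski_smul_right (a : ℝ) (x y : Fin n → ℝ) :
    minkowski x (a • y) = a * minkowski x y := by
  rw [minkowski_comm, minkowski_smul_left, minkowski_comm]

theorem minkowski_add_smul_self (x y : Fin n → ℝ) (a : ℝ) :
    minkowski (x + a • y) (x + a • y)
      = minkowski x x + 2 * a * minkowski x y + a ^ 2 * minkowski y y := by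
  simp only [minkowski_add_left, minkowski_add_right, minkowski_smul_left,
    minkowski_smul_right, minkowski_comm y x]
  ring

end Bilinear

theorem minkowski_self_nonneg_of_apply_zero {n : ℕ} {x : Fin (n + 1) → ℝ} (hx : x 0 = 0) :
    0 ≤ minkowski x x := by
  refine Finset.sum_nonneg fun i _ => ?_
  split_ifs with hi
  · obtain rfl : i = 0 := Fin.ext hi
    simp [hx]
  · nlinarith [mul_self_nonneg (x i)]

theorem minkowski_mul_self_le_sq {n : ℕ} {v : Fin (n + 1) → ℝ} (hv : minkowski v v < 0)
    (t : Fin (n + 1) → ℝ) : minkowski v v * minkowski t t ≤ minkowski v t ^ 2 := by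
  have hv0 : v 0 ≠ 0 := fun h => (minkowski_self_nonneg_of_apply_zero h).not_gt hv
  -- `t + s • v` has vanishing time component, so the quadratic `s ↦ η(t + s v, t + s v)`,
  -- whose leading coefficient is negative, takes a nonnegative value.
  set s := -t 0 / v 0
  have hq : 0 ≤ minkowski (t + s • v) (t + s • v) :=
    minkowski_self_nonneg_of_apply_zero (by simp [s, hv0])
  rw [minkowski_add_smul_self, minkowski_comm t v] at hq
  nlinarith [sq_nonneg (minkowski v v * s + minkowski v t)]

theorem exists_minkowski_orthogonal_spacelike {n : ℕ} (v : Fin (n + 2) → ℝ)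
    (hv : minkowski v v = -1) : ∃ w, minkowski v w = 0 ∧ 0 < minkowski w w := by
  set e : Fin (n + 2) → ℝ := Pi.single 1 1
  have he : minkowski e e = 1 := by
    simp [e, minkowski, Pi.single_apply]
  refine ⟨e + minkowski v e • v, ?_, ?_⟩
  · rw [minkowski_add_right, minkowski_smul_right, hv]
    ring
  · rw [minkowski_add_smul_self, he, hv, minkowski_comm e v]
    nlinarith [sq_nonneg (minkowski v e)]

section PerfectFluid

variable {n : ℕ} {v w : Fin n → ℝ}

theorem minkowski_smul_add_self (hv : minkowski v v = -1) (hvw : minkowski v w = 0) (α : ℝ) :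
    minkowski (α • v + w) (α • v + w) = minkowski w w - α ^ 2 := by
  rw [add_comm, minkowski_add_smul_self, hv, minkowski_comm w v, hvw]
  ring

theorem perfect_fluid_energy_smul_add (hv : minkowski v v = -1) (hvw : minkowski v w = 0)
    (ρ P α : ℝ) :
    (ρ + P) * minkowski v (α • v + w) ^ 2 + P * minkowski (α • v + w) (α • v + w)
      = ρ * α ^ 2 + P * minkowski w w := by
  rw [minkowski_smul_add_self hv hvw, minkowski_add_right, minkowski_smul_right, hv, hvw]
  ring

end PerfectFluid

/-- A perfect fluid with energy density `ρ`, pressure `P` and normalized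
four-velocity `v` satisfies the weak energy condition, i.e.
`(ρ+P) η(v,t)² + P η(t,t) ≥ 0` for all timelike `t`, iff `ρ ≥ 0` and `ρ + P ≥ 0`. -/
theorem perfect_fluid_wec_iff
    (n : ℕ) (hn : 2 ≤ n) (v : Fin n → ℝ) (hv : minkowski v v = -1)
    (ρ P : ℝ) :
    (∀ t : Fin n → ℝ, minkowski t t < 0 →
        0 ≤ (ρ + P) * minkowski v t ^ 2 + P * minkowski t t)
      ↔ (0 ≤ ρ ∧ 0 ≤ ρ + P) := by
  obtain ⟨m, rfl⟩ := Nat.exists_eq_add_of_le' hn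
  constructor
  · intro hwec
    have hρ : 0 ≤ ρ := by
      have := hwec v (by rw [hv]; norm_num)
      rw [hv] at this
      linarith
    obtain ⟨w, hvw, hw⟩ := exists_minkowski_orthogonal_spacelike v hv
    set L := minkowski w w
    have hgt : ∀ x > L, 0 ≤ ρ * x + P * L := fun x hx => by
      have hx0 : 0 ≤ x := hw.le.trans hx.le
      have := hwec (√x • v + w)
        (by rw [minkowski_smul_add_self hv hvw, Real.sq_sqrt hx0]; linarith)
      rwa [perfect_fluid_energy_smul_add hv hvw, Real.sq_sqrt hx0] at this
    have hlim : Tendsto (fun x => ρ * x + P * L) (𝓝[>] L) (𝓝 (ρ * L + P * L)) :=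
      (Continuous.tendsto (by fun_prop) L).mono_left nhdsWithin_le_nhds
    have hL : 0 ≤ (ρ + P) * L := by
      rw [add_mul]
      exact ge_of_tendsto hlim (eventually_nhdsWithin_of_forall hgt)
    exact ⟨hρ, nonneg_of_mul_nonneg_left hL hw⟩
  · rintro ⟨hρ, hρP⟩ t ht
    have hcs := minkowski_mul_self_le_sq (hv.trans_lt (by norm_num)) t
    rw [hv] at hcs
    nlinarith [mul_nonneg hρP (by linarith : 0 ≤ minkowski v t ^ 2 + minkowski t t)]
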